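/- Let α > 1 and suppose X(t) is a [0,1]-valued solution process of the α-Riccati recursion with X(t) ∈ (0,1) on the event [L < t], where L < ∞ a.s. is the hyperexplosion time and P(L < t) > 0 for each t > 0. Then for 0 ≤ λ < λ', the functions u_λ(t) = E[X(t)^λ] satisfy u_{λ'}(t) < u_λ(t) for every t > 0; in particular the family {u_λ}_{λ>0} consists of pairwise distinct solutions. -/

import Mathlib

open MeasureTheory

/-- Let `X(t)` be a `[0,1]`-valued solution process with `X(t) ∈ (0,1)` on
the event `[L < t]`, where `P(L < t) > 0` for each `t > 0`. Then for `0 ≤ λ < λ'` the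
functions `u_λ(t) = E[X(t)^λ]` satisfy `u_{λ'}(t) < u_λ(t)` for every `t > 0`; in
particular the solutions `u_λ`, `λ > 0`, are pairwise distinct. -/
theorem power_solutions_distinct {Ω : Type*} [MeasurableSpace Ω]
    (μ : Measure Ω) [IsProbabilityMeasure μ]
    (α : ℝ) (hα : 1 < α)
    (X : ℝ → Ω → ℝ) (hXmeas : ∀ t, Measurable (X t))
    (hX01 : ∀ t ω, X t ω ∈ Set.Icc (0 : ℝ) 1)
    (L : Ω → ℝ) (hLmeas : Measurable L)
    (hXopen : ∀ t : ℝ, ∀ᵐ ω ∂μ, L ω < t → X t ω ∈ Set.Ioo (0 : ℝ) 1)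
    (hLpos : ∀ t : ℝ, 0 < t → 0 < μ {ω | L ω < t}) :
    (∀ t : ℝ, 0 < t → ∀ lam lam' : ℝ, 0 ≤ lam → lam < lam' →
      (∫ ω, X t ω ^ lam' ∂μ) < ∫ ω, X t ω ^ lam ∂μ) ∧
    ∀ lam lam' : ℝ, 0 < lam → 0 < lam' → lam ≠ lam' →
      (fun t => ∫ ω, X t ω ^ lam ∂μ) ≠ fun t => ∫ ω, X t ω ^ lam' ∂μ := by
  -- integrability of powers
  have hint : ∀ t : ℝ, ∀ lam : ℝ, 0 ≤ lam → Integrable (fun ω => X t ω ^ lam) μ := by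
    intro t lam hlam
    refine Integrable.mono' (integrable_const (1 : ℝ))
      (((Real.continuous_rpow_const hlam).measurable.comp (hXmeas t)).aestronglyMeasurable) ?_
    filter_upwards with ω
    have hx := hX01 t ω
    rw [Real.norm_eq_abs, abs_of_nonneg (Real.rpow_nonneg hx.1 _)]
    exact Real.rpow_le_one hx.1 hx.2 hlam
  have main : ∀ t : ℝ, 0 < t → ∀ lam lam' : ℝ, 0 ≤ lam → lam < lam' →
      (∫ ω, X t ω ^ lam' ∂μ) < ∫ ω, X t ω ^ lam ∂μ := by
    intro t ht lam lam' hlam hlt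
    have hlam' : 0 ≤ lam' := hlam.trans hlt.le
    set f : Ω → ℝ := fun ω => X t ω ^ lam' with hf
    set g : Ω → ℝ := fun ω => X t ω ^ lam with hg
    have hfi := hint t lam' hlam'
    have hgi := hint t lam hlam
    -- pointwise f ≤ g
    have hle : ∀ ω, f ω ≤ g ω := by
      intro ω
      have hx := hX01 t ω
      rcases eq_or_lt_of_le hx.1 with h0 | h0
      · simp only [hf, hg, ← h0]
        rcases eq_or_lt_of_le hlam with h | h
        · rw [← h, Real.rpow_zero, Real.zero_rpow (by linarith)]; norm_num
        · rw [Real.zero_rpow (ne_of_gt h), Real.zero_rpow (by linarith)]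
      · exact Real.rpow_le_rpow_of_exponent_ge h0 hx.2 hlt.le
    have hd : Integrable (fun ω => g ω - f ω) μ := hgi.sub hfi
    have hnn : 0 ≤ᵐ[μ] fun ω => g ω - f ω := by
      filter_upwards with ω using sub_nonneg.2 (hle ω)
    have hpos : 0 < ∫ ω, (g ω - f ω) ∂μ := by
      rw [integral_pos_iff_support_of_nonneg_ae hnn hd]
      have hE := hXopen t
      rcases hE.exists_mem with ⟨s, hs, _⟩
      set E := {ω | L ω < t → X t ω ∈ Set.Ioo (0:ℝ) 1}
      have hEc : μ Eᶜ = 0 := hE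
      have hsub : {ω | L ω < t} ∩ E ⊆ Function.support (fun ω => g ω - f ω) := by
        intro ω ⟨h1, h2⟩
        have hx := h2 h1
        have : f ω < g ω := Real.rpow_lt_rpow_of_exponent_gt hx.1 hx.2 hlt
        simp [Function.mem_support, sub_ne_zero.2 (ne_of_gt this)]
      have : μ {ω | L ω < t} ≤ μ (Function.support fun ω => g ω - f ω) + μ Eᶜ := by
        calc μ {ω | L ω < t} ≤ μ (({ω | L ω < t} ∩ E) ∪ Eᶜ) := by
              apply measure_mono; intro ω hω
              by_cases h : ω ∈ E
              · exact Or.inl ⟨hω, h⟩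
              · exact Or.inr h
          _ ≤ μ ({ω | L ω < t} ∩ E) + μ Eᶜ := measure_union_le _ _
          _ ≤ μ (Function.support fun ω => g ω - f ω) + μ Eᶜ :=
              add_le_add_left (measure_mono hsub) _
      rw [hEc, add_zero] at this
      exact lt_of_lt_of_le (hLpos t ht) this
    rw [integral_sub hgi hfi] at hpos
    linarith
  refine ⟨main, ?_⟩
  intro lam lam' h1 h2 hne heq
  have h1' := congrFun heq 1
  rcases lt_or_gt_of_ne hne with h | h
  · have := main 1 one_pos lam lam' h1.le h
    rw [h1'] at this; exact lt_irrefl _ this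
  · have := main 1 one_pos lam' lam h2.le h
    rw [h1'] at this; exact lt_irrefl _ this
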